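/- arXiv:2508.12634 — 2 statements merged into one kernel-verified Lean document; each statement's English description precedes it below -/
import Mathlib

section
/- Let X and Θ be nonempty compact metric spaces, ϑ⁰ ∈ Θ, and K : X × Θ → ℝ continuous. Let ψ : Θ → ℝ be a nonnegative Borel measurable function such that |K(x,ϑ) − K(y,ϑ)| ≤ ψ(ϑ)·d(x,y) for all x, y ∈ X and ϑ ∈ Θ. Let (P_t)_{t∈ℕ} be Borel probability measures on Θ converging weakly to the Dirac measure δ_{ϑ⁰}, and suppose there is L < ∞ with ∫_Θ ψ dP_t ≤ L for all t. Define f_t(x) = ∫_Θ K(x,ϑ) dP_t(ϑ) and f(x) = K(x,ϑ⁰), and let M_t and M be the (nonempty) sets of minimizers of f_t and f over X, respectively. Then (i) min_{x∈X} f_t(x) → min_{x∈X} f(x) as t → ∞, and (ii) sup_{x∈M_t} dist(x, M) → 0 as t → ∞, where dist(x, M) = inf_{y∈M} d(x,y). -/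
open MeasureTheory Filter Metric Set

/-!
Since `Θ` is compact, `x ↦ K(x, ·)` is continuous into `Θ →ᵇ ℝ` with the sup norm, and integrating
against a probability measure is `1`-Lipschitz on `Θ →ᵇ ℝ`. Hence the `f_t` are equicontinuous,
and on the compact space `X` their pointwise convergence to `f` (weak convergence to `δ_{ϑ⁰}`) is
uniform (Ascoli), which gives convergence of the minimal values. On a compact space, a point whose
`f`-value is close to `min f` is close to the minimizers of `f`; a minimizer of `f_t` is such a
point once `f_t` is uniformly close to `f`.
-/

theorem UniformEquicontinuous.equicontinuous_comp_continuous {ι X β α : Type*}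
    [TopologicalSpace X] [UniformSpace β] [UniformSpace α] {F : ι → β → α}
    (hF : UniformEquicontinuous F) {u : X → β} (hu : Continuous u) :
    Equicontinuous fun i => F i ∘ u := fun x _ hU =>
  (hu.tendsto x).eventually (mem_nhds_left (u x) (hF _ hU))

theorem BoundedContinuousFunction.lipschitzWith_integral {Θ : Type*} [TopologicalSpace Θ]
    [MeasurableSpace Θ] [OpensMeasurableSpace Θ] (μ : Measure Θ) [IsProbabilityMeasure μ] :
    LipschitzWith 1 fun g : BoundedContinuousFunction Θ ℝ => ∫ ϑ, g ϑ ∂μ :=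
  LipschitzWith.of_dist_le_mul fun g h => by
    rw [NNReal.coe_one, one_mul, Real.dist_eq, ← integral_sub (g.integrable μ) (h.integrable μ),
      dist_eq_norm]
    exact (g - h).norm_integral_le_norm μ

theorem tendstoUniformly_integral_of_tendsto_integral {ι X Θ : Type*} [TopologicalSpace X]
    [CompactSpace X] [TopologicalSpace Θ] [CompactSpace Θ] [MeasurableSpace Θ]
    [OpensMeasurableSpace Θ] {l : Filter ι} {μ : ι → Measure Θ} [∀ i, IsProbabilityMeasure (μ i)]
    {ν : Measure Θ}
    (h : ∀ g : BoundedContinuousFunction Θ ℝ,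
      Tendsto (fun i => ∫ ϑ, g ϑ ∂μ i) l (nhds (∫ ϑ, g ϑ ∂ν)))
    (K : C(X × Θ, ℝ)) :
    TendstoUniformly (fun i x => ∫ ϑ, K (x, ϑ) ∂μ i) (fun x => ∫ ϑ, K (x, ϑ) ∂ν) l := by
  set u : X → BoundedContinuousFunction Θ ℝ :=
    fun x => BoundedContinuousFunction.mkOfCompact (K.curry x)
  have hu : Continuous u :=
    (ContinuousMap.isometryEquivBoundedOfCompact Θ ℝ).continuous.comp K.curry.continuous
  have hequi : Equicontinuous fun i x => ∫ ϑ, K (x, ϑ) ∂μ i :=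
    (LipschitzWith.uniformEquicontinuous _ 1 fun i =>
      BoundedContinuousFunction.lipschitzWith_integral (μ i)).equicontinuous_comp_continuous hu
  exact UniformFun.tendsto_iff_tendstoUniformly.1
    ((hequi.tendsto_uniformFun_iff_pi l _).2 (tendsto_pi_nhds.2 fun x => h (u x)))

theorem dist_ciInf_ciInf_le {X : Type*} [Nonempty X] {f g : X → ℝ} {c : ℝ}
    (hf : BddBelow (range f)) (h : ∀ x, dist (f x) (g x) ≤ c) :
    dist (⨅ x, f x) (⨅ x, g x) ≤ c := by
  have hclose x := abs_sub_le_iff.1 ((Real.dist_eq _ _).symm.trans_le (h x))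
  have hg : BddBelow (range g) := by
    obtain ⟨m, hm⟩ := hf
    exact ⟨m - c, forall_mem_range.2 fun x => by linarith [hm (mem_range_self x), hclose x]⟩
  rw [Real.dist_eq, abs_sub_le_iff]
  constructor
  · have : (⨅ x, f x) - c ≤ ⨅ x, g x :=
      le_ciInf fun x => by linarith [ciInf_le hf x, hclose x]
    linarith
  · have : (⨅ x, g x) - c ≤ ⨅ x, f x :=
      le_ciInf fun x => by linarith [ciInf_le hg x, hclose x]
    linarith

theorem TendstoUniformly.tendsto_ciInf {ι X : Type*} [Nonempty X] {l : Filter ι}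
    {F : ι → X → ℝ} {f : X → ℝ} (h : TendstoUniformly F f l) (hf : BddBelow (range f)) :
    Tendsto (fun i => ⨅ x, F i x) l (nhds (⨅ x, f x)) := by
  rw [Metric.tendsto_nhds]
  intro ε hε
  filter_upwards [Metric.tendstoUniformly_iff.1 h (ε / 2) (half_pos hε)] with i hi
  rw [dist_comm]
  exact (dist_ciInf_ciInf_le hf fun x => (hi x).le).trans_lt (half_lt_self hε)

theorem Continuous.exists_pos_forall_infDist_minimizers_lt {X : Type*} [PseudoMetricSpace X]
    [CompactSpace X] {f : X → ℝ} (hf : Continuous f) {ε : ℝ} (hε : 0 < ε) :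
    ∃ δ > 0, ∀ x, f x < (⨅ y, f y) + δ → infDist x {x | ∀ y, f x ≤ f y} < ε := by
  set M := {x | ∀ y, f x ≤ f y}
  set A := {x | ε ≤ infDist x M}
  rcases A.eq_empty_or_nonempty with hA | hA
  · exact ⟨1, one_pos, fun x _ => not_le.1 fun hx => hA.subset hx⟩
  obtain ⟨a, haA, hmin⟩ := (isClosed_le continuous_const
    (continuous_infDist_pt M)).isCompact.exists_isMinOn hA hf.continuousOn
  have haM : a ∉ M := fun ha => by
    have : ε ≤ infDist a M := haA
    linarith [infDist_zero_of_mem ha]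
  obtain ⟨y, hy⟩ : ∃ y, f y < f a := by simpa [M] using haM
  have hbdd : BddBelow (range f) := (isCompact_range hf).isBounded.bddBelow
  refine ⟨f a - ⨅ y, f y, by linarith [ciInf_le hbdd y], fun x hx => not_le.1 fun hxA => ?_⟩
  linarith [isMinOn_iff.1 hmin x hxA]

theorem TendstoUniformly.eventually_forall_minimizers_infDist_lt {ι X : Type*}
    [PseudoMetricSpace X] [CompactSpace X] {l : Filter ι} {F : ι → X → ℝ} {f : X → ℝ}
    (h : TendstoUniformly F f l) (hf : Continuous f) {ε : ℝ} (hε : 0 < ε) :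
    ∀ᶠ i in l, ∀ x ∈ {x | ∀ y, F i x ≤ F i y}, infDist x {x | ∀ y, f x ≤ f y} < ε := by
  obtain ⟨δ, hδ, hnear⟩ := hf.exists_pos_forall_infDist_minimizers_lt hε
  filter_upwards [Metric.tendstoUniformly_iff.1 h (δ / 3) (by positivity)] with i hi x hx
  have : Nonempty X := ⟨x⟩
  have hclose z := abs_sub_lt_iff.1 ((Real.dist_eq _ _).symm.trans_lt (hi z))
  have : f x - 2 * δ / 3 ≤ ⨅ y, f y :=
    le_ciInf fun y => by linarith [hclose x, hclose y, hx y]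
  exact hnear x (by linarith)

theorem tendsto_sSup_image_nhds_zero {ι X : Type*} {l : Filter ι} {g : X → ℝ}
    (hg : ∀ x, 0 ≤ g x) {S : ι → Set X} (h : ∀ ε > 0, ∀ᶠ i in l, ∀ x ∈ S i, g x < ε) :
    Tendsto (fun i => sSup (g '' S i)) l (nhds 0) := by
  rw [Metric.tendsto_nhds]
  intro ε hε
  filter_upwards [h (ε / 2) (half_pos hε)] with i hi
  rw [Real.dist_eq, sub_zero,
    abs_of_nonneg (Real.sSup_nonneg (forall_mem_image.2 fun x _ => hg x))]
  exact (Real.sSup_le (forall_mem_image.2 fun x hx => (hi x hx).le)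
    (half_pos hε).le).trans_lt (half_lt_self hε)

theorem stmt1_general {X Θ : Type*} [MetricSpace X] [CompactSpace X] [Nonempty X]
    [MetricSpace Θ] [CompactSpace Θ]
    [MeasurableSpace Θ] [BorelSpace Θ]
    (ϑ0 : Θ) (K : X × Θ → ℝ) (hK : Continuous K)
    (P : ℕ → Measure Θ) (hP : ∀ t, IsProbabilityMeasure (P t))
    (hweak : ∀ g : BoundedContinuousFunction Θ ℝ,
      Tendsto (fun t => ∫ ϑ, g ϑ ∂(P t)) atTop
        (nhds (∫ ϑ, g ϑ ∂(Measure.dirac ϑ0))))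
    (ft : ℕ → X → ℝ) (hft : ∀ t x, ft t x = ∫ ϑ, K (x, ϑ) ∂(P t))
    (f : X → ℝ) (hf : ∀ x, f x = K (x, ϑ0))
    (Mt : ℕ → Set X) (hMt : ∀ t, Mt t = {x | ∀ y, ft t x ≤ ft t y})
    (M : Set X) (hM : M = {x | ∀ y, f x ≤ f y}) :
    Tendsto (fun t => ⨅ x, ft t x) atTop (nhds (⨅ x, f x)) ∧
    Tendsto (fun t => sSup ((fun x => Metric.infDist x M) '' (Mt t)))
      atTop (nhds 0) := by
  obtain rfl : ft = fun t x => ∫ ϑ, K (x, ϑ) ∂(P t) := funext₂ hft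
  obtain rfl : f = fun x => K (x, ϑ0) := funext hf
  obtain rfl := funext hMt
  subst hM
  have hfc : Continuous fun x => K (x, ϑ0) := hK.comp (.prodMk_left ϑ0)
  have hunif : TendstoUniformly (fun t x => ∫ ϑ, K (x, ϑ) ∂(P t)) (fun x => K (x, ϑ0)) atTop := by
    simpa only [integral_dirac, ContinuousMap.coe_mk] using
      tendstoUniformly_integral_of_tendsto_integral hweak ⟨K, hK⟩
  exact ⟨hunif.tendsto_ciInf (isCompact_range hfc).isBounded.bddBelow,
    tendsto_sSup_image_nhds_zero (fun _ => infDist_nonneg) fun ε hε =>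
      hunif.eventually_forall_minimizers_infDist_lt hfc hε⟩

/-- Consistency of optimal values and optimal solution sets of the
Bayesian averaged objective, given weak posterior consistency `P t ⇒ δ_{ϑ0}` and
a uniformly integrable Lipschitz modulus `ψ`. -/
theorem stmt1 {X Θ : Type*} [MetricSpace X] [CompactSpace X] [Nonempty X]
    [MetricSpace Θ] [CompactSpace Θ] [Nonempty Θ]
    [MeasurableSpace Θ] [BorelSpace Θ]
    (ϑ0 : Θ) (K : X × Θ → ℝ) (hK : Continuous K)
    (ψ : Θ → ℝ) (hψmeas : Measurable ψ) (hψ0 : ∀ ϑ, 0 ≤ ψ ϑ)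
    (hLip : ∀ x y : X, ∀ ϑ : Θ, |K (x, ϑ) - K (y, ϑ)| ≤ ψ ϑ * dist x y)
    (P : ℕ → Measure Θ) (hP : ∀ t, IsProbabilityMeasure (P t))
    (hweak : ∀ g : BoundedContinuousFunction Θ ℝ,
      Tendsto (fun t => ∫ ϑ, g ϑ ∂(P t)) atTop
        (nhds (∫ ϑ, g ϑ ∂(Measure.dirac ϑ0))))
    (L : ℝ) (hL : ∀ t, ∫ ϑ, ψ ϑ ∂(P t) ≤ L)
    (ft : ℕ → X → ℝ) (hft : ∀ t x, ft t x = ∫ ϑ, K (x, ϑ) ∂(P t))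
    (f : X → ℝ) (hf : ∀ x, f x = K (x, ϑ0))
    (Mt : ℕ → Set X) (hMt : ∀ t, Mt t = {x | ∀ y, ft t x ≤ ft t y})
    (M : Set X) (hM : M = {x | ∀ y, f x ≤ f y})
    (hMtne : ∀ t, (Mt t).Nonempty) (hMne : M.Nonempty) :
    Tendsto (fun t => ⨅ x, ft t x) atTop (nhds (⨅ x, f x)) ∧
    Tendsto (fun t => sSup ((fun x => Metric.infDist x M) '' (Mt t)))
      atTop (nhds 0) :=
  stmt1_general ϑ0 K hK P hP hweak ft hft f hf Mt hMt M hM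
end

section
/- Let X be a nonempty compact metric space, F : X → ℝ continuous with minimizer set S* = argmin_{x∈X} F(x), and g : X → ℝ continuous. Let (g_t)_{t∈ℕ} be continuous functions converging uniformly on X to g, and let (ε_t)_{t∈ℕ} be positive reals with ε_t → 0. Then (min_{x∈X}(F(x) + ε_t·g_t(x)) − min_{x∈X} F(x)) / ε_t → min_{x∈S*} g(x) as t → ∞. -/
/-!
Let `a t` minimize `F + ε_t g_t` and let `x₁` minimize `g` over `S*`. Comparing the perturbed
minimum with its value at `x₁` and with `min F` gives the sandwich
`g_t (a t) ≤ (min (F + ε_t g_t) - min F) / ε_t ≤ g_t x₁`. The upper bound tends to `g x₁`.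
For the lower bound, the same comparison shows `F (a t) → min F`; since `{g ≤ c}` is compact
and `F > min F` on it whenever `c < min_{S*} g`, the points `a t` eventually leave it, while
`g_t (a t) - g (a t) → 0` by uniform convergence.
-/

open Filter Topology Set

theorem ciInf_eq_of_forall_le {ι α : Type*} [ConditionallyCompleteLinearOrder α] {f : ι → α}
    {a : ι} (h : ∀ i, f a ≤ f i) : ⨅ i, f i = f a :=
  have : Nonempty ι := ⟨a⟩
  ciInf_eq_of_forall_ge_of_forall_gt_exists_lt h fun _ hw => ⟨a, hw⟩

theorem TendstoUniformly.tendsto_apply_sub_apply {ι X : Type*} {l : Filter ι} {G : ι → X → ℝ}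
    {g : X → ℝ} (h : TendstoUniformly G g l) (a : ι → X) :
    Tendsto (fun i => G i (a i) - g (a i)) l (𝓝 0) := by
  rw [Metric.tendsto_nhds]
  intro δ hδ
  filter_upwards [Metric.tendstoUniformly_iff.mp h δ hδ] with i hi
  simpa [Real.dist_eq, abs_sub_comm] using hi (a i)

section Perturbation

variable {X : Type*} {F : X → ℝ}

theorem perturbed_iInf_sub_iInf_div_mem_Icc {G : X → ℝ} {ε : ℝ} (hε : 0 < ε) {a x : X}
    (ha : ∀ y, F a + ε * G a ≤ F y + ε * G y) (hx : ∀ y, F x ≤ F y) :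
    ((⨅ y, F y + ε * G y) - ⨅ y, F y) / ε ∈ Icc (G a) (G x) := by
  rw [ciInf_eq_of_forall_le ha, ciInf_eq_of_forall_le hx, mem_Icc, le_div_iff₀ hε,
    div_le_iff₀ hε]
  constructor <;> linarith [hx a, ha x]

theorem tendsto_apply_perturbed_argmin {ι : Type*} {l : Filter ι} {G : ι → X → ℝ} {g : X → ℝ}
    {ε : ι → ℝ} (hε : ∀ i, 0 ≤ ε i) (hε0 : Tendsto ε l (𝓝 0)) (hG : TendstoUniformly G g l)
    (hg : BddBelow (range g)) {x₀ : X} (hx₀ : ∀ y, F x₀ ≤ F y) {a : ι → X}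
    (ha : ∀ i y, F (a i) + ε i * G i (a i) ≤ F y + ε i * G i y) :
    Tendsto (fun i => F (a i)) l (𝓝 (F x₀)) := by
  obtain ⟨m, hm⟩ := hg
  rw [mem_lowerBounds, forall_mem_range] at hm
  have hupper : Tendsto (fun i => F x₀ + ε i * (G i x₀ - (G i (a i) - g (a i)) - m)) l
      (𝓝 (F x₀)) := by
    simpa using tendsto_const_nhds.add
      (hε0.mul (((hG.tendsto_at x₀).sub (hG.tendsto_apply_sub_apply a)).sub tendsto_const_nhds))
  refine tendsto_of_tendsto_of_tendsto_of_le_of_le tendsto_const_nhds hupper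
    (fun i => hx₀ (a i)) fun i => ?_
  linarith [ha i x₀, mul_nonneg (hε i) (sub_nonneg.2 (hm (a i)))]

end Perturbation

theorem eventually_lt_of_tendsto_apply_min {X ι : Type*} [TopologicalSpace X] [CompactSpace X]
    {l : Filter ι} {F g : X → ℝ} (hF : Continuous F) (hg : Continuous g) {x₀ : X}
    (hx₀ : ∀ y, F x₀ ≤ F y) {c : ℝ} (hc : ∀ x, (∀ y, F x ≤ F y) → c < g x) {a : ι → X}
    (ha : Tendsto (fun i => F (a i)) l (𝓝 (F x₀))) : ∀ᶠ i in l, c < g (a i) := by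
  have hK : IsCompact {x | g x ≤ c} := (isClosed_le hg continuous_const).isCompact
  obtain ⟨b, hb, hbK⟩ := hK.exists_forall_le' hF.continuousOn (a := F x₀) fun x hx => by
    by_contra! h
    exact (hc x fun y => h.trans (hx₀ y)).not_ge hx
  filter_upwards [ha.eventually (gt_mem_nhds hb)] with i hi
  by_contra! h
  exact (hbK _ h).not_gt hi

/-- Danskin-type directional-derivative formula for the minimum
value functional: with `F` continuous on a nonempty compact metric space, `S*` its
minimizer set, `gt → g` uniformly with all functions continuous, and `εt → 0⁺`,
`(min (F + εt·gt) − min F) / εt → min_{x ∈ S*} g(x)`. -/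
theorem stmt10 {X : Type*} [MetricSpace X] [CompactSpace X] [Nonempty X]
    (F : X → ℝ) (hF : Continuous F)
    (Sstar : Set X) (hS : Sstar = {x | ∀ y, F x ≤ F y})
    (g : X → ℝ) (hg : Continuous g)
    (gt : ℕ → X → ℝ) (hgt : ∀ t, Continuous (gt t))
    (hunif : TendstoUniformly gt g atTop)
    (εt : ℕ → ℝ) (hεt : ∀ t, 0 < εt t)
    (hεt0 : Tendsto εt atTop (nhds 0)) :
    Tendsto
      (fun t => ((⨅ x, (F x + εt t * gt t x)) - ⨅ x, F x) / εt t)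
      atTop (nhds (⨅ x : Sstar, g ↑x)) := by
  have exists_min : ∀ h : X → ℝ, Continuous h → ∃ x, ∀ y, h x ≤ h y := fun h hh =>
    hh.exists_forall_le' (Classical.arbitrary X) (by simp)
  obtain ⟨x₀, hx₀⟩ := exists_min F hF
  have hSc : IsCompact Sstar := by
    rw [hS, ofPred_forall]
    exact (isClosed_iInter fun y => isClosed_le hF continuous_const).isCompact
  obtain ⟨x₁, hx₁S, hx₁⟩ := hSc.exists_isMinOn ⟨x₀, hS ▸ hx₀⟩ hg.continuousOn
  rw [hx₁.iInf_eq hx₁S]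
  choose a ha using fun t => exists_min _ (hF.add (continuous_const.mul (hgt t)))
  have hsandwich := fun t => perturbed_iInf_sub_iInf_div_mem_Icc (hεt t) (ha t) (hS ▸ hx₁S)
  have hFa := tendsto_apply_perturbed_argmin (fun t => (hεt t).le) hεt0 hunif
    (isCompact_range hg).bddBelow hx₀ ha
  refine tendsto_order.2 ⟨fun c hc => ?_, fun c hc => ?_⟩
  · obtain ⟨c', hcc', hc'⟩ := exists_between hc
    have hc'S : ∀ x, (∀ y, F x ≤ F y) → c' < g x := fun x hx => hc'.trans_le (hx₁ (hS ▸ hx))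
    filter_upwards [eventually_lt_of_tendsto_apply_min hF hg hx₀ hc'S hFa,
      (hunif.tendsto_apply_sub_apply a).eventually (lt_mem_nhds (sub_neg.2 hcc'))] with t h₁ h₂
    linarith [(hsandwich t).1]
  · filter_upwards [(hunif.tendsto_at x₁).eventually (gt_mem_nhds hc)] with t ht
    exact (hsandwich t).2.trans_lt ht
end
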